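/- Let k ≥ 1, let G be a k-edge-connected finite simple graph on V, fix a root r ∈ V, and let u₀, …, u_t together with k-cuts S₀, …, S_{t+1} form a snug chain. Let v ∈ S₀ and let 0 ≤ i < j ≤ t. Then every k-cut S of G that is crossed by the pair {v, u_i} is also crossed by the pair {v, u_j}. -/

import Mathlib

open Finset

variable {V : Type*} [Fintype V] [DecidableEq V]

/-- `Crosses S e`: exactly one endpoint of the edge/link `e` lies in `S`. -/
def Crosses (S : Finset V) (e : Sym2 V) : Prop :=
  ∃ x y : V, e = s(x, y) ∧ x ∈ S ∧ y ∉ S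

instance (S : Finset V) : DecidablePred (Crosses S) := fun e =>
  decidable_of_iff (∃ x y : V, e = s(x, y) ∧ x ∈ S ∧ y ∉ S) Iff.rfl

/-- The cut `δ(S)`: edges of `G` with exactly one endpoint in `S`. -/
def cutEdges (G : SimpleGraph V) [DecidableRel G.Adj] (S : Finset V) :
    Finset (Sym2 V) :=
  G.edgeFinset.filter fun e => Crosses S e

/-- `G` is `k`-edge-connected: every nonempty proper cut has at least `k` crossing edges. -/
def EdgeConnected (G : SimpleGraph V) [DecidableRel G.Adj] (k : ℕ) : Prop :=
  ∀ S : Finset V, S.Nonempty → S ≠ Finset.univ → k ≤ (cutEdges G S).card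

/-- `S` is a `k`-cut: a nonempty proper vertex set with exactly `k` crossing edges. -/
def IsCut (G : SimpleGraph V) [DecidableRel G.Adj] (k : ℕ) (S : Finset V) : Prop :=
  S.Nonempty ∧ S ≠ Finset.univ ∧ (cutEdges G S).card = k

/-- `(S₁, S₂)` are snug shores for `v` (with respect to the root `r`):
two `k`-cuts avoiding `r` with `v ∉ S₁` and `S₂ = S₁ ∪ {v}`. -/
def SnugShores (G : SimpleGraph V) [DecidableRel G.Adj] (k : ℕ) (r v : V)
    (S₁ S₂ : Finset V) : Prop :=
  IsCut G k S₁ ∧ IsCut G k S₂ ∧ r ∉ S₁ ∧ r ∉ S₂ ∧ v ∉ S₁ ∧ S₂ = insert v S₁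

/-- `v` is a snug vertex (with respect to the root `r`). -/
def Snug (G : SimpleGraph V) [DecidableRel G.Adj] (k : ℕ) (r v : V) : Prop :=
  v ≠ r ∧ k + 1 ≤ G.degree v ∧ ∃ S₁ S₂ : Finset V, SnugShores G k r v S₁ S₂

/-- A snug chain: snug vertices `u 0, …, u t` together with `k`-cuts
`S 0, …, S (t+1)` such that `(S i, S (i+1))` are snug shores for `u i`. -/
def IsSnugChain (G : SimpleGraph V) [DecidableRel G.Adj] (k : ℕ) (r : V)
    (t : ℕ) (u : ℕ → V) (S : ℕ → Finset V) : Prop :=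
  ∀ i ≤ t, Snug G k r (u i) ∧ SnugShores G k r (u i) (S i) (S (i + 1))

/-!
Cut sizes are submodular and posimodular, so when two `k`-cuts `T` and `S` avoiding the root
cross, the corners `T ∩ S` and `T \ S` are `k`-cuts as well. For snug shores `T₀` and
`T₁ = T₀ ∪ {u}`, the equality `|δ T₀| = |δ T₁|` says that exactly half of the `deg u > k` edges
at `u` leave `T₁`, whereas a vertex in a corner `P` of `T₁` has at most
`(|δ P| + |δ T₁| - |δ (T₁ \ P)|) / 2 = k / 2` edges leaving `T₁`. Hence no `k`-cut avoiding the
root crosses `T₁`: it contains `T₀` when it contains `u`, and lies in `T₁` when it meets `T₀`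
but misses `u`. So a cut separating `v ∈ T₀` from `u` also separates `v` from every vertex
outside `T₁`, in particular from the next vertex of the chain; complements take care of cuts
containing the root.
-/

open scoped symmDiff

lemma Finset.card_symmDiff_add_two_mul_card_inter {α : Type*} [DecidableEq α]
    (s t : Finset α) : #(s ∆ t) + 2 * #(s ∩ t) = #s + #t := by
  have := card_union_add_card_inter s t
  have := card_sdiff_add_card_eq_card (inter_subset_union (s := s) (t := t))
  rw [symmDiff_eq_sup_sdiff_inf]
  simp only [sup_eq_union, inf_eq_inter]
  omega

omit [Fintype V] in
lemma crosses_mk_iff {S : Finset V} {x y : V} : Crosses S s(x, y) ↔ (x ∈ S ↔ y ∉ S) := by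
  constructor
  · rintro ⟨a, b, hab, ha, hb⟩
    rcases Sym2.eq_iff.1 hab with ⟨rfl, rfl⟩ | ⟨rfl, rfl⟩ <;> tauto
  · intro h
    by_cases hx : x ∈ S
    · exact ⟨x, y, rfl, hx, h.1 hx⟩
    · exact ⟨y, x, Sym2.eq_swap, by tauto, hx⟩

lemma crosses_compl {S : Finset V} {e : Sym2 V} : Crosses Sᶜ e ↔ Crosses S e := by
  induction e using Sym2.ind
  simp only [crosses_mk_iff, mem_compl]; tauto

section Cuts

variable (G : SimpleGraph V) [DecidableRel G.Adj]

lemma mem_cutEdges_mk {S : Finset V} {x y : V} :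
    s(x, y) ∈ cutEdges G S ↔ G.Adj x y ∧ (x ∈ S ↔ y ∉ S) := by
  simp [cutEdges, crosses_mk_iff]

lemma cutEdges_compl (S : Finset V) : cutEdges G Sᶜ = cutEdges G S := by
  ext e; induction e using Sym2.ind
  simp only [mem_cutEdges_mk, mem_compl]; tauto

lemma cutEdges_symmDiff (A B : Finset V) :
    cutEdges G (A ∆ B) = cutEdges G A ∆ cutEdges G B := by
  ext e; induction e using Sym2.ind
  simp only [mem_cutEdges_mk, mem_symmDiff]; tauto

lemma cutEdges_singleton (u : V) : cutEdges G {u} = G.incidenceFinset u := by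
  ext e; induction e using Sym2.ind with | _ x y => ?_
  rw [mem_cutEdges_mk, SimpleGraph.mem_incidenceFinset, SimpleGraph.mk'_mem_incidenceSet_iff]
  have : G.Adj x y → x ≠ y := G.ne_of_adj
  simp only [mem_singleton]; grind

lemma card_cutEdges_singleton (u : V) : #(cutEdges G {u}) = G.degree u := by
  rw [cutEdges_singleton, SimpleGraph.card_incidenceFinset_eq_degree]

lemma card_cutEdges_inter_add_card_cutEdges_union_le (A B : Finset V) :
    #(cutEdges G (A ∩ B)) + #(cutEdges G (A ∪ B)) ≤ #(cutEdges G A) + #(cutEdges G B) := by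
  rw [← card_union_add_card_inter, ← card_union_add_card_inter (cutEdges G A)]
  refine add_le_add (card_le_card ?_) (card_le_card ?_) <;>
  · intro e; induction e using Sym2.ind
    simp only [mem_union, mem_inter, mem_cutEdges_mk]; tauto

lemma card_cutEdges_sdiff_add_card_cutEdges_sdiff_le (A B : Finset V) :
    #(cutEdges G (A \ B)) + #(cutEdges G (B \ A)) ≤ #(cutEdges G A) + #(cutEdges G B) := by
  have := card_cutEdges_inter_add_card_cutEdges_union_le G A Bᶜ
  rwa [← sdiff_eq_inter_compl, show A ∪ Bᶜ = (B \ A)ᶜ by ext; simp; tauto, cutEdges_compl,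
    cutEdges_compl] at this

lemma card_cutEdges_add_card_cutEdges_of_subset {P T : Finset V} (h : P ⊆ T) :
    #(cutEdges G P) + #(cutEdges G T) =
      #(cutEdges G (T \ P)) + 2 * #(cutEdges G P ∩ cutEdges G T) := by
  rw [← symmDiff_of_le h, cutEdges_symmDiff, card_symmDiff_add_two_mul_card_inter]

lemma cutEdges_singleton_inter_subset {u : V} {P T : Finset V} (hu : u ∈ P) (h : P ⊆ T) :
    cutEdges G {u} ∩ cutEdges G T ⊆ cutEdges G P ∩ cutEdges G T := by
  intro e; induction e using Sym2.ind with | _ x y => ?_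
  simp only [mem_inter, mem_cutEdges_mk, mem_singleton]
  grind

end Cuts

section KCuts

variable {G : SimpleGraph V} [DecidableRel G.Adj] {k : ℕ} {r u v w : V} {S T T₀ T₁ : Finset V}

lemma IsCut.compl (h : IsCut G k S) : IsCut G k Sᶜ :=
  ⟨by simpa [nonempty_iff_ne_empty] using h.2.1, (compl_ne_univ_iff_nonempty S).2 h.1,
    by rw [cutEdges_compl, h.2.2]⟩

lemma EdgeConnected.le_card_cutEdges (hG : EdgeConnected G k) (hS : S.Nonempty) (hr : r ∉ S) :
    k ≤ #(cutEdges G S) :=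
  hG S hS fun h => hr (h ▸ mem_univ r)

lemma card_cutEdges_inter_eq (hG : EdgeConnected G k) (hT : IsCut G k T) (hS : IsCut G k S)
    (hrT : r ∉ T) (hrS : r ∉ S) (hTS : (T ∩ S).Nonempty) : #(cutEdges G (T ∩ S)) = k := by
  have h_inter := hG.le_card_cutEdges hTS (r := r) (by simp [hrT])
  have h_union := hG.le_card_cutEdges (hTS.mono inter_subset_union) (r := r) (by simp [hrT, hrS])
  have := card_cutEdges_inter_add_card_cutEdges_union_le G T S
  rw [hT.2.2, hS.2.2] at this
  omega

lemma card_cutEdges_sdiff_eq (hG : EdgeConnected G k) (hT : IsCut G k T) (hS : IsCut G k S)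
    (hrT : r ∉ T) (hrS : r ∉ S) (hTS : (T \ S).Nonempty) (hST : (S \ T).Nonempty) :
    #(cutEdges G (T \ S)) = k := by
  have h_TS := hG.le_card_cutEdges hTS (r := r) (by simp [hrT])
  have h_ST := hG.le_card_cutEdges hST (r := r) (by simp [hrS])
  have := card_cutEdges_sdiff_add_card_cutEdges_sdiff_le G T S
  rw [hT.2.2, hS.2.2] at this
  omega

lemma two_mul_card_cutEdges_singleton_inter_le {P : Finset V} (hu : u ∈ P) (hPT : P ⊆ T)
    (hP : #(cutEdges G P) = k) (hT : #(cutEdges G T) = k) (hTP : #(cutEdges G (T \ P)) = k) :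
    2 * #(cutEdges G {u} ∩ cutEdges G T) ≤ k :=
  calc 2 * #(cutEdges G {u} ∩ cutEdges G T)
      ≤ 2 * #(cutEdges G P ∩ cutEdges G T) := by
        gcongr 2 * ?_; exact card_le_card (cutEdges_singleton_inter_subset G hu hPT)
    _ = k := by have := card_cutEdges_add_card_cutEdges_of_subset G hPT; omega

namespace SnugShores

lemma subset (h : SnugShores G k r u T₀ T₁) : T₀ ⊆ T₁ :=
  h.2.2.2.2.2 ▸ subset_insert u T₀

lemma mem_right (h : SnugShores G k r u T₀ T₁) : u ∈ T₁ :=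
  h.2.2.2.2.2 ▸ mem_insert_self u T₀

lemma two_mul_card_cutEdges_singleton_inter (h : SnugShores G k r u T₀ T₁) :
    2 * #(cutEdges G {u} ∩ cutEdges G T₁) = G.degree u := by
  obtain ⟨hT₀, hT₁, -, -, hu, rfl⟩ := h
  have := card_cutEdges_add_card_cutEdges_of_subset G
    (singleton_subset_iff.2 (mem_insert_self u T₀))
  rw [sdiff_singleton_eq_erase, erase_insert hu, card_cutEdges_singleton, hT₀.2.2, hT₁.2.2] at this
  omega

lemma not_crossing (hG : EdgeConnected G k) (h : SnugShores G k r u T₀ T₁)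
    (hdeg : k + 1 ≤ G.degree u) (hS : IsCut G k S) (hrS : r ∉ S)
    (h_inter : (T₁ ∩ S).Nonempty) (h_sdiff : (T₁ \ S).Nonempty) (h_sdiff' : (S \ T₁).Nonempty) :
    False := by
  have ⟨_, hT₁, _, hrT₁, _⟩ := h
  have hk_inter := card_cutEdges_inter_eq hG hT₁ hS hrT₁ hrS h_inter
  have hk_sdiff := card_cutEdges_sdiff_eq hG hT₁ hS hrT₁ hrS h_sdiff h_sdiff'
  have hu := h.two_mul_card_cutEdges_singleton_inter
  have : 2 * #(cutEdges G {u} ∩ cutEdges G T₁) ≤ k := by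
    by_cases huS : u ∈ S
    · refine two_mul_card_cutEdges_singleton_inter_le (mem_inter.2 ⟨h.mem_right, huS⟩)
        inter_subset_left hk_inter hT₁.2.2 ?_
      rwa [sdiff_inter_self_left]
    · refine two_mul_card_cutEdges_singleton_inter_le (mem_sdiff.2 ⟨h.mem_right, huS⟩)
        sdiff_subset hk_sdiff hT₁.2.2 ?_
      rwa [sdiff_sdiff_right_self, inf_eq_inter]
  omega

lemma subset_of_mem (hG : EdgeConnected G k) (h : SnugShores G k r u T₀ T₁)
    (hdeg : k + 1 ≤ G.degree u) (hS : IsCut G k S) (hrS : r ∉ S) (huS : u ∈ S) : T₀ ⊆ S := by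
  intro v hv
  by_contra hvS
  have ⟨hT₀, _, hrT₀, _, huT₀, hT₁⟩ := h
  by_cases h_out : (S \ T₁).Nonempty
  · exact h.not_crossing hG hdeg hS hrS ⟨u, mem_inter.2 ⟨h.mem_right, huS⟩⟩
      ⟨v, mem_sdiff.2 ⟨h.subset hv, hvS⟩⟩ h_out
  -- Now `S ⊆ T₁`, so `S \ T₀ = {u}`, and posimodularity with `T₀` gives `k + deg u ≤ 2k`.
  have hSu : S \ T₀ = {u} := by
    rw [not_nonempty_iff_eq_empty, sdiff_eq_empty_iff_subset, hT₁] at h_out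
    ext w
    simp only [mem_sdiff, mem_singleton]
    constructor
    · rintro ⟨hwS, hwT₀⟩
      exact (mem_insert.1 (h_out hwS)).resolve_right hwT₀
    · rintro rfl
      exact ⟨huS, huT₀⟩
  have h_sdiff := card_cutEdges_sdiff_add_card_cutEdges_sdiff_le G T₀ S
  rw [hSu, card_cutEdges_singleton, hT₀.2.2, hS.2.2] at h_sdiff
  have := hG.le_card_cutEdges (r := r) ⟨v, mem_sdiff.2 ⟨hv, hvS⟩⟩ fun h => hrT₀ (mem_sdiff.1 h).1
  omega

lemma subset_of_notMem (hG : EdgeConnected G k) (h : SnugShores G k r u T₀ T₁)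
    (hdeg : k + 1 ≤ G.degree u) (hS : IsCut G k S) (hrS : r ∉ S) (huS : u ∉ S)
    (hv : v ∈ T₀) (hvS : v ∈ S) : S ⊆ T₁ := by
  intro w hwS
  by_contra hwT₁
  exact h.not_crossing hG hdeg hS hrS ⟨v, mem_inter.2 ⟨h.subset hv, hvS⟩⟩
    ⟨u, mem_sdiff.2 ⟨h.mem_right, huS⟩⟩ ⟨w, mem_sdiff.2 ⟨hwS, hwT₁⟩⟩

lemma crosses_of_crosses (hG : EdgeConnected G k) (h : SnugShores G k r u T₀ T₁)
    (hdeg : k + 1 ≤ G.degree u) (hv : v ∈ T₀) (hw : w ∉ T₁) (hS : IsCut G k S)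
    (hvu : Crosses S s(v, u)) : Crosses S s(v, w) := by
  wlog hrS : r ∉ S generalizing S
  · exact crosses_compl.1 <| this hS.compl (crosses_compl.2 hvu) (by simpa using hrS)
  rw [crosses_mk_iff] at hvu ⊢
  have huS : u ∉ S := fun huS => hvu.1 (h.subset_of_mem hG hdeg hS hrS huS hv) huS
  have hvS : v ∈ S := hvu.2 huS
  exact iff_of_true hvS fun hwS => hw (h.subset_of_notMem hG hdeg hS hrS huS hv hvS hwS)

end SnugShores

end KCuts

namespace IsSnugChain

variable {G : SimpleGraph V} [DecidableRel G.Adj] {k t : ℕ} {r : V} {u : ℕ → V}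
  {Sc : ℕ → Finset V}

lemma zero_subset (hc : IsSnugChain G k r t u Sc) {m : ℕ} (hm : m ≤ t) : Sc 0 ⊆ Sc m := by
  induction m with
  | zero => exact Subset.refl _
  | succ m ih => exact (ih (by omega)).trans (hc m (by omega)).2.subset

lemma crosses_succ (hG : EdgeConnected G k) (hc : IsSnugChain G k r t u Sc) {v : V}
    (hv : v ∈ Sc 0) {m : ℕ} (hm : m < t) {S : Finset V} (hS : IsCut G k S)
    (h : Crosses S s(v, u m)) : Crosses S s(v, u (m + 1)) :=
  have ⟨⟨_, hdeg, _⟩, hshores⟩ := hc m hm.le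
  have ⟨_, _, _, _, hw, _⟩ := (hc (m + 1) hm).2
  hshores.crosses_of_crosses hG hdeg (hc.zero_subset hm.le hv) hw hS h

end IsSnugChain

theorem link_furthest_out_general
    (k : ℕ) (G : SimpleGraph V) [DecidableRel G.Adj]
    (hG : EdgeConnected G k) (r : V)
    (t : ℕ) (u : ℕ → V) (Sc : ℕ → Finset V)
    (hchain : IsSnugChain G k r t u Sc)
    (v : V) (hv : v ∈ Sc 0)
    (i j : ℕ) (hij : i < j) (hjt : j ≤ t)
    (S : Finset V) (hS : IsCut G k S) (hcross : Crosses S s(v, u i)) :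
    Crosses S s(v, u j) := by
  induction j, hij using Nat.le_induction with
  | base => exact hchain.crosses_succ hG hv (by omega) hS hcross
  | succ j _ ih => exact hchain.crosses_succ hG hv (by omega) hS (ih (by omega))

/-- Along a snug chain, for `v ∈ S₀` and `i < j ≤ t`, every `k`-cut crossed by
the link `{v, u i}` is also crossed by the link `{v, u j}`. -/
theorem link_furthest_out
    (k : ℕ) (hk : 1 ≤ k) (G : SimpleGraph V) [DecidableRel G.Adj]
    (hG : EdgeConnected G k) (r : V)
    (t : ℕ) (u : ℕ → V) (Sc : ℕ → Finset V)
    (hchain : IsSnugChain G k r t u Sc)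
    (v : V) (hv : v ∈ Sc 0)
    (i j : ℕ) (hij : i < j) (hjt : j ≤ t)
    (S : Finset V) (hS : IsCut G k S) (hcross : Crosses S s(v, u i)) :
    Crosses S s(v, u j) :=
  link_furthest_out_general k G hG r t u Sc hchain v hv i j hij hjt S hS hcross
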